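/- Let p, a ∈ ℕ with a ≤ p ≤ n. In the plactic monoid of type C of rank n, the word 𝔠(p)·𝔠(p;0,a), where 𝔠(p;0,a) = p̄ (p-1)‾ ⋯ (p-a+1)‾, is plactically congruent to the single column 𝔠(p-a) = 12⋯(p-a). -/

import Mathlib

namespace TypeC

/-- Letters of `C_n` are encoded as indices `0, …, 2n-1` in increasing order:
index `x < n` is the unbarred value `x+1`, and index `x ≥ n` is the barred
letter `bar (2n - x)`.  `Nval n z w` is the number `N_z(w)` of letters `x` of
`w` with `x ≤ z` or `x ≥ z̄` (as values). -/
def Nval (n z : ℕ) (w : List ℕ) : ℕ :=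
  w.countP (fun x => decide (x + 1 ≤ z ∨ 2 * n - z ≤ x))

/-- A column: a strictly increasing word over `C_n`. -/
def IsColumn (n : ℕ) (w : List ℕ) : Prop :=
  List.Pairwise (· < ·) w ∧ ∀ x ∈ w, x < 2 * n

/-- An admissible column: nonempty and `N_z(w) ≤ z` for all `z = 1,…,n`. -/
def Admissible (n : ℕ) (w : List ℕ) : Prop :=
  IsColumn n w ∧ w ≠ [] ∧ ∀ z, 1 ≤ z → z ≤ n → Nval n z w ≤ z

/-- `v` is a (nonempty) strict factor of `w`. -/
def StrictFactor (v w : List ℕ) : Prop :=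
  v ≠ [] ∧ ∃ w₀ w₁, w = w₀ ++ v ++ w₁ ∧ ¬(w₀ = [] ∧ w₁ = [])

/-- An almost admissible column: not admissible, but all strict factors are. -/
def AlmostAdmissible (n : ℕ) (w : List ℕ) : Prop :=
  IsColumn n w ∧ ¬Admissible n w ∧ ∀ v, StrictFactor v w → Admissible n v

/-- Lecouvey's defining relations `R₁`, `R₂`, `R₃` of the type `C` plactic
monoid, on words of letter indices.  The bar involution on indices is
`x ↦ 2n - 1 - x`; the unbarred value `x` has index `x - 1` and `x̄` has index
`2n - x`. -/
inductive PlStep (n : ℕ) : List ℕ → List ℕ → Prop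
  | R1a (x y z : ℕ) : x ≤ y → y < z → z < 2 * n → z ≠ 2 * n - 1 - x →
      PlStep n [y, z, x] [y, x, z]
  | R1b (x y z : ℕ) : x < y → y ≤ z → z < 2 * n → z ≠ 2 * n - 1 - x →
      PlStep n [x, z, y] [z, x, y]
  | R2a (x y : ℕ) : 1 < x → x ≤ n → x - 1 ≤ y → y ≤ 2 * n - x →
      PlStep n [y, 2 * n - x + 1, x - 2] [y, x - 1, 2 * n - x]
  | R2b (x y : ℕ) : 1 < x → x ≤ n → x - 1 ≤ y → y ≤ 2 * n - x →
      PlStep n [x - 1, 2 * n - x, y] [2 * n - x + 1, x - 2, y]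
  | R3 (w : List ℕ) (z : ℕ) : AlmostAdmissible n w → 1 ≤ z → z ≤ n →
      (z - 1) ∈ w → (2 * n - z) ∈ w → Nval n z w = z + 1 →
      (∀ z', 1 ≤ z' → z' < z →
        ¬((z' - 1) ∈ w ∧ (2 * n - z') ∈ w ∧ Nval n z' w = z' + 1)) →
      PlStep n w ((w.erase (z - 1)).erase (2 * n - z))

/-- One plactic rewriting step in context. -/
def CtxStep (n : ℕ) (u v : List ℕ) : Prop :=
  ∃ a b x y, PlStep n x y ∧ u = a ++ x ++ b ∧ v = a ++ y ++ b

/-- The plactic congruence of type `C`. -/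
def PlacticEq (n : ℕ) : List ℕ → List ℕ → Prop :=
  Relation.EqvGen (CtxStep n)

/-- An `(a,b)`-configuration (Kashiwara–Nakashima) in the pair of columns
`(c, d)`. -/
def HasConfig (n : ℕ) (c d : List ℕ) : Prop :=
  ∃ a b p q r s, 1 ≤ a ∧ a ≤ b ∧ b ≤ n ∧ p ≤ q ∧ q < r ∧ r ≤ s ∧
    (((getElem? c p) = some (a - 1) ∧ (getElem? d q) = some (b - 1) ∧
      (getElem? d r) = some (2 * n - b) ∧ (getElem? d s) = some (2 * n - a)) ∨
     ((getElem? c p) = some (a - 1) ∧ (getElem? c q) = some (b - 1) ∧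
      (getElem? c r) = some (2 * n - b) ∧ (getElem? d s) = some (2 * n - a))) ∧
    b - a ≤ (s - r) + (q - p)

/-- `Prec n c d` means `c ⪯ d` : `c` is at least as long as `d`, entrywise
`≤`, and there is no `(a,b)`-configuration.  With the convention `ε = []`,
this gives `c ⪯ ε` for every `c`. -/
def Prec (n : ℕ) (c d : List ℕ) : Prop :=
  d.length ≤ c.length ∧
  (∀ i xi yi, (getElem? c (i : ℕ)) = some xi → (getElem? d i) = some yi → xi ≤ yi) ∧
  ¬HasConfig n c d

/-- A generator of `ACol`: the empty column `ε = []` or an admissible column. -/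
def ColOrEps (n : ℕ) (c : List ℕ) : Prop := c = [] ∨ Admissible n c

/-- `(c₁ ← c₂) = d₁d₂` : the pair `(d₁, d₂)` is the `ε`-padded normal form of
the column insertion, characterised as the normal pair plactically congruent
to `c₁c₂`. -/
def InsPair (n : ℕ) (c₁ c₂ d₁ d₂ : List ℕ) : Prop :=
  ColOrEps n d₁ ∧ ColOrEps n d₂ ∧ Prec n d₂ d₁ ∧
  PlacticEq n (c₁ ++ c₂) (d₁ ++ d₂)

/-- A rewriting step of the `2`-polygraph `ACol` at position `j`. -/
def StepAt (n : ℕ) (j : ℕ) (w w' : List (List ℕ)) : Prop :=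
  ∃ (u v : List (List ℕ)) (c₁ c₂ d₁ d₂ : List ℕ),
    u.length = j ∧ w = u ++ c₁ :: c₂ :: v ∧ w' = u ++ d₁ :: d₂ :: v ∧
    ¬Prec n c₂ c₁ ∧ InsPair n c₁ c₂ d₁ d₂

/-- A rewriting step of `ACol` (at some position). -/
def AColStep (n : ℕ) (w w' : List (List ℕ)) : Prop := ∃ j, StepAt n j w w'

/-- The congruence generated by `ACol`, presenting `Pl^ℕ(C_n)`. -/
def AColEq (n : ℕ) : List (List ℕ) → List (List ℕ) → Prop :=
  Relation.EqvGen (AColStep n)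

/-- `RedTo n w s w'` : applying the reduction strategy `s` (a list of
positions) to `w` is valid and yields `w'`. -/
inductive RedTo (n : ℕ) : List (List ℕ) → List ℕ → List (List ℕ) → Prop
  | nil (w : List (List ℕ)) : RedTo n w [] w
  | cons {w w' w'' : List (List ℕ)} {j : ℕ} {s : List ℕ} :
      StepAt n j w w' → RedTo n w' s w'' → RedTo n w (j :: s) w''

/-- A tableau word: a word of admissible columns with `c_{i+1} ⪯ c_i`. -/
def TabWord (n : ℕ) (g : List (List ℕ)) : Prop :=
  (∀ c ∈ g, Admissible n c) ∧ List.Chain' (fun cl cr => Prec n cr cl) g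

/-- The label of the crystal edge going out of the letter with index `x`. -/
def labelOf (n x : ℕ) : ℕ := if x < n then x + 1 else 2 * n - 1 - x

def phiL (n i x : ℕ) : ℕ := if x + 1 < 2 * n ∧ labelOf n x = i then 1 else 0

def epsL (n i x : ℕ) : ℕ := if 0 < x ∧ labelOf n (x - 1) = i then 1 else 0

/-- `ε_i` of a word (Kashiwara). -/
def epsW (n i : ℕ) : List ℕ → ℕ
  | [] => 0
  | x :: u => epsL n i x + (epsW n i u - phiL n i x)

/-- `φ_i` of a word (Kashiwara). -/
def phiW (n i : ℕ) : List ℕ → ℕ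
  | [] => 0
  | x :: u => phiW n i u + (phiL n i x - epsW n i u)

/-- The Kashiwara lowering operator `f_i` on words of `C_n^*`. -/
def fW (n i : ℕ) : List ℕ → Option (List ℕ)
  | [] => none
  | x :: u =>
      if epsW n i u < phiL n i x then some ((x + 1) :: u)
      else (fW n i u).map (x :: ·)

/-- The Kashiwara raising operator `e_i` on words of `C_n^*`. -/
def eW (n i : ℕ) : List ℕ → Option (List ℕ)
  | [] => none
  | x :: u =>
      if epsW n i u ≤ phiL n i x then
        (if epsL n i x = 1 then some ((x - 1) :: u) else none)
      else (eW n i u).map (x :: ·)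

/-- `f_i` on words over `ACol(C_n)` (each letter a column, `ε = []`). -/
def fA (n i : ℕ) : List (List ℕ) → Option (List (List ℕ))
  | [] => none
  | c :: w =>
      if epsW n i w.flatten < phiW n i c then (fW n i c).map (· :: w)
      else (fA n i w).map (c :: ·)

/-- `e_i` on words over `ACol(C_n)`. -/
def eA (n i : ℕ) : List (List ℕ) → Option (List (List ℕ))
  | [] => none
  | c :: w =>
      if epsW n i w.flatten ≤ phiW n i c then (eW n i c).map (· :: w)
      else (eA n i w).map (c :: ·)

/-! C-trees.  A labeling of the `C`-tree is encoded by two functions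
`sOut i j = s(ij)` (outer vertices, `sOut i 0 = s(i)`) and
`sInn i j = s(ij⁻)` (inner vertices, `j ≥ 1`), for strands `i ≥ 1`. -/

def SO (sOut : ℕ → ℕ → ℕ) (i j : ℕ) : ℕ := ∑ l ∈ Finset.range (j + 1), sOut i l
def SI (sInn : ℕ → ℕ → ℕ) (i j : ℕ) : ℕ := ∑ l ∈ Finset.range (j + 1), sInn i l

/-- The valuation `q(ij)` at an outer vertex. -/
def qOut (sOut sInn : ℕ → ℕ → ℕ) (i j : ℕ) : ℕ := SO sOut i j - SI sInn i (j - 1)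

/-- The valuation `q(ij⁻)` at an inner vertex. -/
def qInn (sOut sInn : ℕ → ℕ → ℕ) (i j : ℕ) : ℕ := SO sOut i j - SI sInn i j

/-- Labels vanish outside the rank-`k` truncation (and on the fictitious
strand `0` and inner vertices `i0⁻`). -/
def TreeSupport (k : ℕ) (sOut sInn : ℕ → ℕ → ℕ) : Prop :=
  (∀ i j, i = 0 ∨ k < i + j → sOut i j = 0) ∧
  (∀ i j, i = 0 ∨ j = 0 ∨ k < i + j → sInn i j = 0)

/-- `n`-labeling condition: `0 ≤ q(v) ≤ n` at every vertex. -/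
def NLabeled (n : ℕ) (sOut sInn : ℕ → ℕ → ℕ) : Prop :=
  ∀ i j, SI sInn i j ≤ SO sOut i j ∧ qOut sOut sInn i j ≤ n

/-- Column conditions: `q(ij) ≤ q((i−1)(j+1)⁻)` and `q(ij) ≤ q((i−1)j⁻)`. -/
def ColumnCond (k : ℕ) (sOut sInn : ℕ → ℕ → ℕ) : Prop :=
  ∀ i j, 2 ≤ i → i + j ≤ k →
    qOut sOut sInn i j ≤ qInn sOut sInn (i - 1) (j + 1) ∧
    (1 ≤ j → qOut sOut sInn i j ≤ qInn sOut sInn (i - 1) j)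

/-- Admissibility conditions of a labeled `C`-tree. -/
def AdmissCond (k : ℕ) (sOut sInn : ℕ → ℕ → ℕ) : Prop :=
  ∀ t l, t ≤ k → l + 1 ≤ t →
    (∑ i ∈ Finset.range (l + 1), (sOut (t - i) i + sInn (t - i) i)) ≤
      qOut sOut sInn (t - l) l

/-- An admissible `n`-labeled `C`-tree of rank `k`. -/
def IsAdmTree (n k : ℕ) (sOut sInn : ℕ → ℕ → ℕ) : Prop :=
  TreeSupport k sOut sInn ∧ NLabeled n sOut sInn ∧
  ColumnCond k sOut sInn ∧ AdmissCond k sOut sInn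

/-- The block column `ρ(ij)` read off an outer vertex. -/
def rhoOut (sOut sInn : ℕ → ℕ → ℕ) (i j : ℕ) : List ℕ :=
  if j = 0 then List.range (sOut i 0)
  else List.range' (qInn sOut sInn i (j - 1)) (sOut i j)

/-- The block column `ρ(ij⁻)` read off an inner vertex. -/
def rhoInn (n : ℕ) (sOut sInn : ℕ → ℕ → ℕ) (i j : ℕ) : List ℕ :=
  List.range' (2 * n - qOut sOut sInn i j) (sInn i j)

/-- The reading `ω_t` of the `t`-th level. -/
def levelWord (n : ℕ) (sOut sInn : ℕ → ℕ → ℕ) (t : ℕ) : List ℕ :=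
  ((List.range t).map (fun l => rhoOut sOut sInn (t - l) l)).flatten ++
  ((List.range (t - 1)).map (fun m => rhoInn n sOut sInn (m + 1) (t - (m + 1)))).flatten

/-- The reading `ω(T) ∈ ACol(C_n)^*` of a labeled `C`-tree of rank `k`. -/
def omegaT (n k : ℕ) (sOut sInn : ℕ → ℕ → ℕ) : List (List ℕ) :=
  (List.range k).map (fun t => levelWord n sOut sInn (t + 1))

/-! The column `1 ⋯ p p̄` is almost admissible: its only violation is `N_p = p + 1`, witnessed by
the pair `(p, p̄)`, so `R₃` deletes that pair and leaves `1 ⋯ (p-1)`. Peeling off the barred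
letters `p̄, (p-1)‾, …` one at a time in this way reduces `𝔠(p) 𝔠(p;0,a)` to `𝔠(p-a)`. -/

lemma placticEq_of_plStep {n : ℕ} {x y : List ℕ} (h : PlStep n x y) (u v : List ℕ) :
    PlacticEq n (u ++ x ++ v) (u ++ y ++ v) :=
  Relation.EqvGen.rel _ _ ⟨u, v, x, y, h, rfl, rfl⟩

lemma StrictFactor.sublist_tail_or_dropLast {v w : List ℕ} (h : StrictFactor v w) :
    v.Sublist w.tail ∨ v.Sublist w.dropLast := by
  obtain ⟨-, w₀, w₁, rfl, hproper⟩ := h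
  cases w₀ with
  | cons x w₀ => exact Or.inl (by simp)
  | nil =>
    have hw₁ : w₁ ≠ [] := fun h => hproper ⟨rfl, h⟩
    rw [List.nil_append, List.dropLast_append_of_ne_nil hw₁]
    exact Or.inr (List.sublist_append_left _ _)

lemma IsColumn.sublist {n : ℕ} {v w : List ℕ} (hw : IsColumn n w) (h : v.Sublist w) :
    IsColumn n v :=
  ⟨hw.1.sublist h, fun x hx => hw.2 x (h.subset hx)⟩

section

variable {n z : ℕ}

lemma nval_append (l₁ l₂ : List ℕ) : Nval n z (l₁ ++ l₂) = Nval n z l₁ + Nval n z l₂ :=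
  List.countP_append

lemma nval_le_of_sublist {l₁ l₂ : List ℕ} (h : l₁.Sublist l₂) : Nval n z l₁ ≤ Nval n z l₂ :=
  h.countP_le

lemma nval_singleton_le (x : ℕ) : Nval n z [x] ≤ 1 :=
  List.countP_le_length

lemma Admissible.sublist {v w : List ℕ} (hw : Admissible n w) (h : v.Sublist w) (hv : v ≠ []) :
    Admissible n v :=
  ⟨hw.1.sublist h, hv, fun z hz hzn => (nval_le_of_sublist h).trans (hw.2.2 z hz hzn)⟩

/-- Among unbarred letters, `N_z` only counts those `≤ z`. -/
lemma nval_range'_le (hz : z ≤ n) {i m : ℕ} (him : i + m ≤ n) :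
    Nval n z (List.range' i m) ≤ z - i := by
  induction m generalizing i with
  | zero => simp [Nval]
  | succ m ih =>
    have hrest := ih (i := i + 1) (by omega)
    rw [List.range'_succ]
    unfold Nval at hrest ⊢
    rw [List.countP_cons]
    split_ifs with hi <;> simp only [decide_eq_true_eq] at hi <;> omega

lemma nval_range_self (z : ℕ) : Nval n z (List.range z) = z := by
  unfold Nval
  rw [List.countP_eq_length.2, List.length_range]
  intro x hx
  simp only [List.mem_range] at hx
  simp only [decide_eq_true_eq]
  omega

lemma nval_singleton_bar : Nval n z [2 * n - z] = 1 := by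
  simp only [Nval, List.countP_singleton, decide_eq_true_eq]
  rw [if_pos (Or.inr le_rfl)]

end

section

variable {n q : ℕ}

lemma isColumn_range_append_bar (hq : q + 1 ≤ n) :
    IsColumn n (List.range (q + 1) ++ [2 * n - (q + 1)]) := by
  refine ⟨List.pairwise_append.2 ⟨List.pairwise_lt_range, by simp, ?_⟩, ?_⟩
  · intro x hx y hy
    simp only [List.mem_range, List.mem_singleton] at hx hy
    omega
  · intro x hx
    simp only [List.mem_append, List.mem_range, List.mem_singleton] at hx
    omega

lemma not_admissible_range_append_bar (hq : q + 1 ≤ n) :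
    ¬Admissible n (List.range (q + 1) ++ [2 * n - (q + 1)]) := by
  rintro ⟨-, -, h⟩
  have hN := h (q + 1) (by omega) hq
  rw [nval_append, nval_range_self, nval_singleton_bar] at hN
  omega

lemma admissible_range_succ (hq : q + 1 ≤ n) : Admissible n (List.range (q + 1)) := by
  refine ⟨⟨List.pairwise_lt_range, fun x hx => ?_⟩, by simp, fun z _ hzn => ?_⟩
  · simp only [List.mem_range] at hx
    omega
  · have := nval_range'_le hzn (i := 0) (m := q + 1) (by omega)
    rwa [← List.range_eq_range'] at this

lemma admissible_tail_range_append_bar (hq : q + 1 ≤ n) :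
    Admissible n (List.range (q + 1) ++ [2 * n - (q + 1)]).tail := by
  have htail : (List.range (q + 1) ++ [2 * n - (q + 1)]).tail =
      List.range' 1 q ++ [2 * n - (q + 1)] := by
    simp [List.range_eq_range', List.range'_succ]
  refine ⟨(isColumn_range_append_bar hq).sublist (List.tail_sublist _), by simp [htail],
    fun z hz hzn => ?_⟩
  rw [htail, nval_append]
  have := nval_range'_le hzn (i := 1) (m := q) (by omega)
  have := nval_singleton_le (n := n) (z := z) (2 * n - (q + 1))
  omega

lemma almostAdmissible_range_append_bar (hq : q + 1 ≤ n) :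
    AlmostAdmissible n (List.range (q + 1) ++ [2 * n - (q + 1)]) := by
  refine ⟨isColumn_range_append_bar hq, not_admissible_range_append_bar hq, fun v hv => ?_⟩
  rcases hv.sublist_tail_or_dropLast with h | h
  · exact (admissible_tail_range_append_bar hq).sublist h hv.1
  · rw [List.dropLast_concat] at h
    exact (admissible_range_succ hq).sublist h hv.1

lemma plStep_range_append_bar (hq : q + 1 ≤ n) :
    PlStep n (List.range (q + 1) ++ [2 * n - (q + 1)]) (List.range q) := by
  have hN : Nval n (q + 1) (List.range (q + 1) ++ [2 * n - (q + 1)]) = q + 1 + 1 := by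
    rw [nval_append, nval_range_self, nval_singleton_bar]
  have hstep := PlStep.R3 _ (q + 1) (almostAdmissible_range_append_bar hq) (by omega) hq
    (by simp) (by simp) hN (by
      rintro z' - hz' ⟨-, hmem, -⟩
      simp only [List.mem_append, List.mem_range, List.mem_singleton] at hmem
      omega)
  have herase : ((List.range (q + 1) ++ [2 * n - (q + 1)]).erase q).erase (2 * n - (q + 1)) =
      List.range q := by
    rw [List.range_succ, List.append_assoc, List.erase_append_right _ List.not_mem_range_self,
      List.singleton_append, List.erase_cons_head,
      List.erase_append_right _ (by simp only [List.mem_range]; omega), List.erase_cons_head,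
      List.append_nil]
  rwa [Nat.add_sub_cancel, herase] at hstep

end

/-- For `a ≤ p ≤ n`, in `Pl(C_n)` the word `𝔠(p)·𝔠(p;0,a)`, where
`𝔠(p;0,a) = p̄ (p-1)‾ ⋯ (p-a+1)‾` has index word `List.range' (2n-p) a`,
is plactically congruent to the single column `𝔠(p-a) = 12⋯(p-a)`. -/
theorem stmt8 (n p a : ℕ) (h1 : a ≤ p) (h2 : p ≤ n) :
    PlacticEq n (List.range p ++ List.range' (2 * n - p) a)
      (List.range (p - a)) := by
  induction a generalizing p with
  | zero =>
    simp only [List.range'_zero, List.append_nil, Nat.sub_zero]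
    exact Relation.EqvGen.refl _
  | succ a ih =>
    obtain ⟨q, rfl⟩ : ∃ q, p = q + 1 := ⟨p - 1, by omega⟩
    have hsplit : List.range (q + 1) ++ List.range' (2 * n - (q + 1)) (a + 1) =
        [] ++ (List.range (q + 1) ++ [2 * n - (q + 1)]) ++ List.range' (2 * n - q) a := by
      rw [List.range'_succ, show 2 * n - (q + 1) + 1 = 2 * n - q by omega]
      simp
    rw [hsplit, Nat.add_sub_add_right]
    exact .trans _ _ _ (placticEq_of_plStep (plStep_range_append_bar h2) _ _)
      (ih q (by omega) (by omega))

end TypeC
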